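/- Let V_0, …, V_{K−1} be subspaces of a finite-dimensional vector space over a field, indexed cyclically (indices mod K), and let α_j = Σ_{i=0}^{K−1} dim⟨V_i, V_{i+1}, …, V_{i+j−1}⟩ (the span of the union of j cyclically consecutive subspaces). Suppose that for every i, the subspace V_{i+m+1} intersects ⟨V_i, …, V_{i+j−2}⟩ only in {0} for all 2 ≤ j ≤ m+1. Then α_j ≥ ((m+j)/(m+1))·α_1 for all 2 ≤ j ≤ m+1. -/

import Mathlib

/-!
Submodularity of `finrank`, applied to the two overlapping windows of length `j + 1` starting
at `i` and `i + 1` (their sum contains the window of length `j + 2` at `i`, their intersection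
the window of length `j` at `i + 1`), shows that `α` is concave:
`α (j + 2) + α j ≤ 2 α (j + 1)`.
At `j = m` the window of length `m` at `i` meets `V (i + m + 1)` trivially, which sharpens the
same count to `α 1 + 2 α m ≤ 2 α (m + 1)`: the last increment is at least `α 1 / 2`.
By concavity every earlier increment is at least as large, so `2 α j ≥ (j + 1) α 1`, and
`(j + 1) / 2 ≥ (m + j) / (m + 1)` because `(j - 1)(m - 1) ≥ 0`.
-/

open Fin.NatCast

section Window

variable {L : Type*} [CompleteLattice L] {K : ℕ} [NeZero K] (V : Fin K → L)

def cyclicWindow (j : ℕ) (i : Fin K) : L :=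
  ⨆ s : Fin j, V (i + ((s : ℕ) : Fin K))

lemma cyclicWindow_eq_biSup (j : ℕ) (i : Fin K) :
    cyclicWindow V j i = ⨆ k < j, V (i + (k : Fin K)) :=
  le_antisymm
    (iSup_le fun s => le_iSup₂_of_le (f := fun k (_ : k < j) => V (i + (k : Fin K))) s s.2 le_rfl)
    (iSup₂_le fun k hk => le_iSup (fun s : Fin j => V (i + ((s : ℕ) : Fin K))) ⟨k, hk⟩)

lemma cyclicWindow_one (i : Fin K) : cyclicWindow V 1 i = V i := by
  simp [cyclicWindow]

lemma cyclicWindow_succ (j : ℕ) (i : Fin K) :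
    cyclicWindow V (j + 1) i = cyclicWindow V j i ⊔ V (i + (j : Fin K)) := by
  rw [cyclicWindow_eq_biSup, cyclicWindow_eq_biSup, Nat.iSup_lt_succ]

lemma cyclicWindow_succ' (j : ℕ) (i : Fin K) :
    cyclicWindow V (j + 1) i = V i ⊔ cyclicWindow V j (i + 1) := by
  simp only [cyclicWindow_eq_biSup, Nat.iSup_lt_succ', Nat.cast_zero, add_zero, Nat.cast_succ,
    add_assoc, add_comm (1 : Fin K)]

lemma cyclicWindow_le_cyclicWindow_succ (j : ℕ) (i : Fin K) :
    cyclicWindow V j i ≤ cyclicWindow V (j + 1) i :=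
  (cyclicWindow_succ V j i).symm ▸ le_sup_left

lemma cyclicWindow_add_one_le_cyclicWindow_succ (j : ℕ) (i : Fin K) :
    cyclicWindow V j (i + 1) ≤ cyclicWindow V (j + 1) i :=
  (cyclicWindow_succ' V j i).symm ▸ le_sup_right

lemma le_cyclicWindow_succ (j : ℕ) (i : Fin K) : V i ≤ cyclicWindow V (j + 1) i :=
  (cyclicWindow_succ' V j i).symm ▸ le_sup_left

end Window

lemma sum_comp_add_right {G M : Type*} [AddGroup G] [Fintype G] [AddCommMonoid M] (g : G → M)
    (c : G) : ∑ i, g (i + c) = ∑ i, g i :=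
  Equiv.sum_comp (Equiv.addRight c) g

section Rank

open Module Submodule

variable {F W : Type*} [DivisionRing F] [AddCommGroup W] [Module F W] [FiniteDimensional F W]

lemma finrank_add_finrank_le_of_le_sup_of_le_inf {A B X Y : Submodule F W} (hX : X ≤ A ⊔ B)
    (hY : Y ≤ A ⊓ B) : finrank F X + finrank F Y ≤ finrank F A + finrank F B :=
  finrank_sup_add_finrank_inf_eq A B ▸ add_le_add (finrank_mono hX) (finrank_mono hY)

variable {K : ℕ} [NeZero K] (V : Fin K → Submodule F W)

lemma finrank_cyclicWindow_concave (j : ℕ) (i : Fin K) :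
    finrank F ↥(cyclicWindow V (j + 2) i) + finrank F ↥(cyclicWindow V j (i + 1)) ≤
      finrank F ↥(cyclicWindow V (j + 1) i) + finrank F ↥(cyclicWindow V (j + 1) (i + 1)) := by
  refine finrank_add_finrank_le_of_le_sup_of_le_inf ?_
    (le_inf (cyclicWindow_add_one_le_cyclicWindow_succ V j i)
      (cyclicWindow_le_cyclicWindow_succ V j (i + 1)))
  rw [cyclicWindow_succ' V (j + 1)]
  exact sup_le_sup_right (le_cyclicWindow_succ V j i) _

lemma finrank_cyclicWindow_add_le_of_disjoint {m : ℕ} {i : Fin K}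
    (hdisj : Disjoint (cyclicWindow V m i) (V (i + ((m + 1 : ℕ) : Fin K)))) :
    finrank F ↥(cyclicWindow V m i) + finrank F (V (i + ((m + 1 : ℕ) : Fin K)))
        + finrank F ↥(cyclicWindow V m (i + 1)) ≤
      finrank F ↥(cyclicWindow V (m + 1) i) + finrank F ↥(cyclicWindow V (m + 1) (i + 1)) := by
  have hlast : V (i + ((m + 1 : ℕ) : Fin K)) ≤ cyclicWindow V (m + 1) (i + 1) := by
    rw [Nat.cast_succ, ← add_assoc, add_right_comm]
    exact (cyclicWindow_succ V m (i + 1)).symm ▸ le_sup_right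
  have hsup :=
    finrank_sup_add_finrank_inf_eq (cyclicWindow V m i) (V (i + ((m + 1 : ℕ) : Fin K)))
  rw [hdisj.eq_bot, finrank_bot, add_zero] at hsup
  exact hsup ▸ finrank_add_finrank_le_of_le_sup_of_le_inf
    (sup_le_sup (cyclicWindow_le_cyclicWindow_succ V m i) hlast)
    (le_inf (cyclicWindow_add_one_le_cyclicWindow_succ V m i)
      (cyclicWindow_le_cyclicWindow_succ V m (i + 1)))

lemma sum_finrank_cyclicWindow_concave (j : ℕ) :
    ∑ i, finrank F ↥(cyclicWindow V (j + 2) i) + ∑ i, finrank F ↥(cyclicWindow V j i) ≤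
      2 * ∑ i, finrank F ↥(cyclicWindow V (j + 1) i) := by
  have h := Finset.sum_le_sum fun i (_ : i ∈ Finset.univ) => finrank_cyclicWindow_concave V j i
  simp only [Finset.sum_add_distrib,
    sum_comp_add_right (fun i => finrank F ↥(cyclicWindow V j i)),
    sum_comp_add_right (fun i => finrank F ↥(cyclicWindow V (j + 1) i))] at h
  omega

lemma sum_finrank_cyclicWindow_le_of_disjoint {m : ℕ}
    (hdisj : ∀ i, Disjoint (cyclicWindow V m i) (V (i + ((m + 1 : ℕ) : Fin K)))) :
    ∑ i, finrank F ↥(V i) + 2 * ∑ i, finrank F ↥(cyclicWindow V m i) ≤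
      2 * ∑ i, finrank F ↥(cyclicWindow V (m + 1) i) := by
  have h := Finset.sum_le_sum fun i (_ : i ∈ Finset.univ) =>
    finrank_cyclicWindow_add_le_of_disjoint V (hdisj i)
  simp only [Finset.sum_add_distrib, sum_comp_add_right (fun i => finrank F ↥(V i)),
    sum_comp_add_right (fun i => finrank F ↥(cyclicWindow V m i)),
    sum_comp_add_right (fun i => finrank F ↥(cyclicWindow V (m + 1) i))] at h
  omega

end Rank

lemma succ_mul_le_two_mul_of_concave {R : Type*} [Field R] [LinearOrder R] [IsStrictOrderedRing R]
    {a : ℕ → R} {m : ℕ} (hconc : ∀ t, a (t + 2) + a t ≤ 2 * a (t + 1))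
    (hlast : a 1 + 2 * a m ≤ 2 * a (m + 1)) {j : ℕ} (hj : 1 ≤ j) (hjm : j ≤ m + 1) :
    (j + 1) * a 1 ≤ 2 * a j := by
  have hanti : Antitone fun t => a (t + 1) - a t :=
    antitone_nat_of_succ_le fun t => by linarith [hconc t]
  induction j, hj using Nat.le_induction with
  | base => norm_num
  | succ t ht ih =>
    have hincr := hanti (show t ≤ m by omega)
    push_cast
    linarith [ih (by omega)]

theorem stmt_4_general {F W : Type*} [Field F] [AddCommGroup W] [Module F W] [FiniteDimensional F W]
    (K m : ℕ) [NeZero K]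
    (V : Fin K → Submodule F W)
    (α : ℕ → ℕ)
    (hα : ∀ j, α j = ∑ i : Fin K, Module.finrank F ↥(⨆ s : Fin j, V (i + ((s : ℕ) : Fin K))))
    (hindep : ∀ i : Fin K, ∀ j, 2 ≤ j → j ≤ m + 1 →
      (⨆ s : Fin (j - 1), V (i + ((s : ℕ) : Fin K))) ⊓ V (i + (((m + 1 : ℕ)) : Fin K)) = ⊥) :
    ∀ j, 2 ≤ j → j ≤ m + 1 →
      (((m : ℚ) + j) / (m + 1)) * (α 1 : ℚ) ≤ (α j : ℚ) := by
  intro j hj2 hjm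
  have hαw : ∀ t, α t = ∑ i, Module.finrank F ↥(cyclicWindow V t i) := hα
  have hconc : ∀ t, (α (t + 2) : ℚ) + α t ≤ 2 * α (t + 1) := fun t => by
    exact_mod_cast hαw (t + 2) ▸ hαw t ▸ hαw (t + 1) ▸ sum_finrank_cyclicWindow_concave V t
  have hlast : (α 1 : ℚ) + 2 * α m ≤ 2 * α (m + 1) := by
    have h := sum_finrank_cyclicWindow_le_of_disjoint V (m := m) fun i =>
      disjoint_iff.mpr (hindep i (m + 1) (by omega) le_rfl)
    have hα1 : α 1 = ∑ i, Module.finrank F ↥(V i) := by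
      rw [hαw]
      exact Finset.sum_congr rfl fun i _ => by rw [cyclicWindow_one]
    rw [← hα1, ← hαw, ← hαw] at h
    exact_mod_cast h
  have hj := succ_mul_le_two_mul_of_concave (a := fun t => (α t : ℚ)) hconc hlast (by omega) hjm
  have hcoef : ((m : ℚ) + j) / (m + 1) ≤ (j + 1) / 2 := by
    rw [div_le_div_iff₀ (by positivity) (by positivity)]
    have hm1 : (1 : ℚ) ≤ m := by exact_mod_cast (show 1 ≤ m by omega)
    have hj1 : (1 : ℚ) ≤ j := by exact_mod_cast (show 1 ≤ j by omega)
    nlinarith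
  calc ((m : ℚ) + j) / (m + 1) * α 1 ≤ (j + 1) / 2 * α 1 := by gcongr
    _ ≤ α j := by linarith

theorem stmt_4 {F W : Type*} [Field F] [AddCommGroup W] [Module F W] [FiniteDimensional F W]
    (K m : ℕ) [NeZero K] (hK : 2 * m + 2 ≤ K)
    (V : Fin K → Submodule F W)
    (α : ℕ → ℕ)
    (hα : ∀ j, α j = ∑ i : Fin K, Module.finrank F ↥(⨆ s : Fin j, V (i + ((s : ℕ) : Fin K))))
    (hindep : ∀ i : Fin K, ∀ j, 2 ≤ j → j ≤ m + 1 →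
      (⨆ s : Fin (j - 1), V (i + ((s : ℕ) : Fin K))) ⊓ V (i + (((m + 1 : ℕ)) : Fin K)) = ⊥) :
    ∀ j, 2 ≤ j → j ≤ m + 1 →
      (((m : ℚ) + j) / (m + 1)) * (α 1 : ℚ) ≤ (α j : ℚ) :=
  stmt_4_general K m V α hα hindep
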